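/- Let a^{jk} (1 ≤ j,k ≤ N) be real-valued C² functions on ℝ^N with a^{jk} = a^{kj}, let ℓ be a real-valued C³ function and v a real-valued C² function on ℝ^N. Set I₂ := a^{jk}(v_{jk} + ℓ_j ℓ_k v) and I₁ := −2 a^{jk} ℓ_j v_k. Then at every point of ℝ^N: 2 I₂ I₁ = 4 (a^{jk} a^{j'k'} ℓ_{j'})_j v_{k'} v_k − 2 (a^{jk} a^{j'k'} ℓ_{j'})_{k'} v_j v_k + 2 (a^{jk} a^{j'k'} ℓ_{j'} ℓ_{k'} ℓ_k)_j v² + ∂_j [ a^{jk} a^{j'k'} ( 2 ℓ_k v_{j'} v_{k'} − 4 ℓ_{j'} v_k v_{k'} − 2 ℓ_{j'} ℓ_{k'} ℓ_k v² ) ]. -/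

import Mathlib

/-- Partial derivative `∂_j` of a real-valued function on `ℝ^N`. -/
noncomputable def pd {N : ℕ} (j : Fin N) (w : (Fin N → ℝ) → ℝ) : (Fin N → ℝ) → ℝ :=
  fun x => fderiv ℝ w x (Pi.single j 1)

/-- `I₂ := a^{jk}(v_{jk} + ℓ_j ℓ_k v)` (summed over `j,k`). -/
noncomputable def I2 {N : ℕ} (a : Fin N → Fin N → (Fin N → ℝ) → ℝ)
    (l v : (Fin N → ℝ) → ℝ) : (Fin N → ℝ) → ℝ :=
  fun x => ∑ j, ∑ k, a j k x * (pd j (pd k v) x + pd j l x * pd k l x * v x)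

/-- `I₁ := −2 a^{jk} ℓ_j v_k` (summed over `j,k`). -/
noncomputable def I1 {N : ℕ} (a : Fin N → Fin N → (Fin N → ℝ) → ℝ)
    (l v : (Fin N → ℝ) → ℝ) : (Fin N → ℝ) → ℝ :=
  fun x => -2 * ∑ j, ∑ k, a j k x * pd j l x * pd k v x

/-!
Expanding the divergence term by the Leibniz rule, the part in which `∂_j` falls on the
coefficient `a^{jk} a^{j'k'} ℓ ⋯` cancels the first and third terms outright, and the second one
after the relabelling `(j, k, j', k') ↦ (k', j', j, k)` of the summation indices, which uses
`a^{jk} = a^{kj}`. In the part in which `∂_j` falls on the expression in `v`, the same relabelling,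
the swap `j' ↔ k'` and the symmetry of the Hessian of `v` cancel the terms carrying `ℓ_k` against
`-4 a^{jk} a^{j'k'} ℓ_{j'} v_k v_{jk'}`. What is left,
`-4 a^{jk} a^{j'k'} ℓ_{j'} (v_{jk} v_{k'} + ℓ_{k'} ℓ_k v v_j)`, is `2 I₂ I₁` after one more
relabelling of that kind.
-/

section PartialDerivatives

variable {N : ℕ} {p : Fin N → ℝ} {f g : (Fin N → ℝ) → ℝ}

theorem contDiff_pd {m n : WithTop ℕ∞} (j : Fin N) (hf : ContDiff ℝ n f) (h : m + 1 ≤ n) :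
    ContDiff ℝ m (pd j f) :=
  (ContinuousLinearMap.apply ℝ ℝ (Pi.single j 1 : Fin N → ℝ)).contDiff.comp (hf.fderiv_right h)

theorem pd_pd_eq_fderiv_fderiv (hf : DifferentiableAt ℝ (fderiv ℝ f) p) (j k : Fin N) :
    pd j (pd k f) p = fderiv ℝ (fderiv ℝ f) p (Pi.single j 1) (Pi.single k 1) := by
  change fderiv ℝ (fun x => fderiv ℝ f x (Pi.single k 1)) p (Pi.single j 1) = _
  simp [fderiv_clm_apply hf (differentiableAt_const _)]

theorem pd_comm (hf : ContDiffAt ℝ 2 f p) (j k : Fin N) :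
    pd j (pd k f) p = pd k (pd j f) p := by
  have hf' : DifferentiableAt ℝ (fderiv ℝ f) p :=
    (hf.fderiv_right (m := 1) le_rfl).differentiableAt one_ne_zero
  rw [pd_pd_eq_fderiv_fderiv hf', pd_pd_eq_fderiv_fderiv hf']
  exact hf.isSymmSndFDerivAt (by simp) _ _

theorem pd_mul (hf : DifferentiableAt ℝ f p) (hg : DifferentiableAt ℝ g p) (j : Fin N) :
    pd j (fun x => f x * g x) p = pd j f p * g p + f p * pd j g p := by
  simp only [pd, fderiv_fun_mul hf hg, add_apply, smul_apply, smul_eq_mul]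
  ring

theorem pd_mul_mul {h : (Fin N → ℝ) → ℝ} (hf : DifferentiableAt ℝ f p)
    (hg : DifferentiableAt ℝ g p) (hh : DifferentiableAt ℝ h p) (j : Fin N) :
    pd j (fun x => f x * (g x * h x)) p
      = pd j f p * (g p * h p) + f p * (pd j g p * h p + g p * pd j h p) := by
  rw [pd_mul hf (hg.fun_mul hh), pd_mul hg hh]

theorem pd_sub (hf : DifferentiableAt ℝ f p) (hg : DifferentiableAt ℝ g p) (j : Fin N) :
    pd j (fun x => f x - g x) p = pd j f p - pd j g p := by
  simp [pd, fderiv_fun_sub hf hg]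

theorem pd_const_mul (hf : DifferentiableAt ℝ f p) (c : ℝ) (j : Fin N) :
    pd j (fun x => c * f x) p = c * pd j f p := by
  simp [pd, fderiv_const_mul hf c]

theorem pd_sum {ι : Type*} {s : Finset ι} {F : ι → (Fin N → ℝ) → ℝ}
    (hF : ∀ i ∈ s, DifferentiableAt ℝ (F i) p) (j : Fin N) :
    pd j (fun x => ∑ i ∈ s, F i x) p = ∑ i ∈ s, pd j (F i) p := by
  simp [pd, fderiv_fun_sum hF]

end PartialDerivatives

section Reindexing

variable {ι M : Type*} [Fintype ι] [AddCommMonoid M]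

theorem sum_sum_sum_sum_congr {f g : ι → ι → ι → ι → M} (h : ∀ i j k l, f i j k l = g i j k l) :
    ∑ i, ∑ j, ∑ k, ∑ l, f i j k l = ∑ i, ∑ j, ∑ k, ∑ l, g i j k l := by
  simp only [h]

theorem sum_sum_sum_sum_comm_inner (f : ι → ι → ι → ι → M) :
    ∑ i, ∑ j, ∑ k, ∑ l, f i j k l = ∑ i, ∑ j, ∑ k, ∑ l, f i j l k :=
  Finset.sum_congr rfl fun _ _ => Finset.sum_congr rfl fun _ _ => Finset.sum_comm

theorem sum_sum_sum_sum_comm_pairs (f : ι → ι → ι → ι → M) :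
    ∑ i, ∑ j, ∑ k, ∑ l, f i j k l = ∑ i, ∑ j, ∑ k, ∑ l, f k l i j := by
  calc ∑ i, ∑ j, ∑ k, ∑ l, f i j k l
      = ∑ i, ∑ k, ∑ j, ∑ l, f i j k l := Finset.sum_congr rfl fun _ _ => Finset.sum_comm
    _ = ∑ k, ∑ i, ∑ j, ∑ l, f i j k l := Finset.sum_comm
    _ = ∑ k, ∑ i, ∑ l, ∑ j, f i j k l :=
        Finset.sum_congr rfl fun _ _ => Finset.sum_congr rfl fun _ _ => Finset.sum_comm
    _ = ∑ k, ∑ l, ∑ i, ∑ j, f i j k l := Finset.sum_congr rfl fun _ _ => Finset.sum_comm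

end Reindexing

section CrossTerm

variable {N : ℕ} (a : Fin N → Fin N → (Fin N → ℝ) → ℝ) (l v : (Fin N → ℝ) → ℝ) (p : Fin N → ℝ)

theorem pd_divergence_summand (ha : ∀ j k, DifferentiableAt ℝ (a j k) p)
    (hl : ∀ i, DifferentiableAt ℝ (pd i l) p) (hv : DifferentiableAt ℝ v p)
    (hv' : ∀ i, DifferentiableAt ℝ (pd i v) p) (j k j' k' : Fin N) :
    pd j (fun x => a j k x * a j' k' x *
        (2 * pd k l x * pd j' v x * pd k' v x
          - 4 * pd j' l x * pd k v x * pd k' v x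
          - 2 * pd j' l x * pd k' l x * pd k l x * v x ^ 2)) p
      = 2 * (pd j (fun x => a j k x * a j' k' x * pd k l x) p * pd j' v p * pd k' v p)
        + 2 * (a j k p * a j' k' p * pd k l p * pd j (pd j' v) p * pd k' v p)
        + 2 * (a j k p * a j' k' p * pd k l p * pd j' v p * pd j (pd k' v) p)
        - 4 * (pd j (fun x => a j k x * a j' k' x * pd j' l x) p * pd k' v p * pd k v p)
        - 4 * (a j k p * a j' k' p * pd j' l p * pd j (pd k v) p * pd k' v p)
        - 4 * (a j k p * a j' k' p * pd j' l p * pd k v p * pd j (pd k' v) p)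
        - 2 * (pd j (fun x => a j k x * a j' k' x * pd j' l x * pd k' l x * pd k l x) p
            * v p ^ 2)
        - 4 * (a j k p * a j' k' p * pd j' l p * pd k' l p * pd k l p * v p * pd j v p) := by
  have hsplit : (fun x => a j k x * a j' k' x *
        (2 * pd k l x * pd j' v x * pd k' v x
          - 4 * pd j' l x * pd k v x * pd k' v x
          - 2 * pd j' l x * pd k' l x * pd k l x * v x ^ 2))
      = fun x => 2 * ((a j k x * a j' k' x * pd k l x) * (pd j' v x * pd k' v x))
        - 4 * ((a j k x * a j' k' x * pd j' l x) * (pd k v x * pd k' v x))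
        - 2 * ((a j k x * a j' k' x * pd j' l x * pd k' l x * pd k l x) * (v x * v x)) := by
    funext x; ring
  rw [hsplit, pd_sub, pd_sub, pd_const_mul, pd_const_mul, pd_const_mul,
    pd_mul_mul, pd_mul_mul, pd_mul_mul]
  · ring
  all_goals fun_prop

theorem sum_pd_divergence (ha : ∀ j k, DifferentiableAt ℝ (a j k) p)
    (hl : ∀ i, DifferentiableAt ℝ (pd i l) p) (hv : DifferentiableAt ℝ v p)
    (hv' : ∀ i, DifferentiableAt ℝ (pd i v) p) :
    ∑ j, pd j (fun x => ∑ k, ∑ j', ∑ k', a j k x * a j' k' x *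
        (2 * pd k l x * pd j' v x * pd k' v x
          - 4 * pd j' l x * pd k v x * pd k' v x
          - 2 * pd j' l x * pd k' l x * pd k l x * v x ^ 2)) p
      = 2 * ∑ j, ∑ k, ∑ j', ∑ k',
            pd j (fun x => a j k x * a j' k' x * pd k l x) p * pd j' v p * pd k' v p
        + 2 * ∑ j, ∑ k, ∑ j', ∑ k',
            a j k p * a j' k' p * pd k l p * pd j (pd j' v) p * pd k' v p
        + 2 * ∑ j, ∑ k, ∑ j', ∑ k',
            a j k p * a j' k' p * pd k l p * pd j' v p * pd j (pd k' v) p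
        - 4 * ∑ j, ∑ k, ∑ j', ∑ k',
            pd j (fun x => a j k x * a j' k' x * pd j' l x) p * pd k' v p * pd k v p
        - 4 * ∑ j, ∑ k, ∑ j', ∑ k',
            a j k p * a j' k' p * pd j' l p * pd j (pd k v) p * pd k' v p
        - 4 * ∑ j, ∑ k, ∑ j', ∑ k',
            a j k p * a j' k' p * pd j' l p * pd k v p * pd j (pd k' v) p
        - 2 * ∑ j, ∑ k, ∑ j', ∑ k',
            pd j (fun x => a j k x * a j' k' x * pd j' l x * pd k' l x * pd k l x) p * v p ^ 2
        - 4 * ∑ j, ∑ k, ∑ j', ∑ k',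
            a j k p * a j' k' p * pd j' l p * pd k' l p * pd k l p * v p * pd j v p := by
  simp (disch := intro _ _; fun_prop) only [pd_sum]
  simp only [pd_divergence_summand a l v p ha hl hv hv', Finset.sum_add_distrib, Finset.sum_sub_distrib,
    Finset.mul_sum]

theorem sum_pd_coeff_reindex (hsym : ∀ j k, a j k = a k j) :
    ∑ j, ∑ k, ∑ j', ∑ k',
        pd k' (fun x => a j k x * a j' k' x * pd j' l x) p * pd j v p * pd k v p
      = ∑ j, ∑ k, ∑ j', ∑ k',
        pd j (fun x => a j k x * a j' k' x * pd k l x) p * pd j' v p * pd k' v p := by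
  rw [eq_comm, sum_sum_sum_sum_comm_pairs, sum_sum_sum_sum_comm_inner]
  refine sum_sum_sum_sum_congr fun j k j' k' => ?_
  congr 3
  funext x
  rw [hsym k' j']
  ring

theorem sum_hessian_comm_inner (hsym : ∀ j k, a j k = a k j) :
    ∑ j, ∑ k, ∑ j', ∑ k', a j k p * a j' k' p * pd k l p * pd j' v p * pd j (pd k' v) p
      = ∑ j, ∑ k, ∑ j', ∑ k', a j k p * a j' k' p * pd k l p * pd j (pd j' v) p * pd k' v p := by
  rw [sum_sum_sum_sum_comm_inner]
  refine sum_sum_sum_sum_congr fun j k j' k' => ?_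
  rw [hsym k' j']
  ring

theorem sum_hessian_reindex (hsym : ∀ j k, a j k = a k j)
    (hv : ∀ i j, pd i (pd j v) p = pd j (pd i v) p) :
    ∑ j, ∑ k, ∑ j', ∑ k', a j k p * a j' k' p * pd j' l p * pd k v p * pd j (pd k' v) p
      = ∑ j, ∑ k, ∑ j', ∑ k', a j k p * a j' k' p * pd k l p * pd j (pd j' v) p * pd k' v p := by
  rw [eq_comm, sum_sum_sum_sum_comm_pairs, sum_sum_sum_sum_comm_inner]
  refine sum_sum_sum_sum_congr fun j k j' k' => ?_
  rw [hsym k' j', hv k' j]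
  ring

theorem two_mul_I2_mul_I1 (hsym : ∀ j k, a j k = a k j) :
    2 * I2 a l v p * I1 a l v p
      = -4 * ∑ j, ∑ k, ∑ j', ∑ k',
            a j k p * a j' k' p * pd j' l p * pd j (pd k v) p * pd k' v p
        - 4 * ∑ j, ∑ k, ∑ j', ∑ k',
            a j k p * a j' k' p * pd j' l p * pd k' l p * pd k l p * v p * pd j v p := by
  have hreindex : ∑ j, ∑ k, ∑ j', ∑ k',
        a j k p * a j' k' p * pd j' l p * pd k' l p * pd k l p * v p * pd j v p
      = ∑ j, ∑ k, ∑ j', ∑ k',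
        a j k p * a j' k' p * pd j l p * pd k l p * pd j' l p * v p * pd k' v p := by
    rw [sum_sum_sum_sum_comm_pairs, sum_sum_sum_sum_comm_inner]
    refine sum_sum_sum_sum_congr fun j k j' k' => ?_
    rw [hsym k' j']
    ring
  rw [hreindex]
  simp only [I2, I1, Finset.mul_sum, Finset.sum_mul, ← Finset.sum_sub_distrib]
  -- the expanded product carries the indices of `I₁` outermost
  rw [sum_sum_sum_sum_comm_pairs]
  refine sum_sum_sum_sum_congr fun j k j' k' => ?_
  ring

end CrossTerm

theorem cross_term_I2_I1_general {N : ℕ}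
    (a : Fin N → Fin N → (Fin N → ℝ) → ℝ) (ha : ∀ j k, ContDiff ℝ 2 (a j k))
    (hsym : ∀ j k, a j k = a k j)
    (l v : (Fin N → ℝ) → ℝ) (hl : ContDiff ℝ 3 l) (hv : ContDiff ℝ 2 v)
    (p : Fin N → ℝ) :
    2 * I2 a l v p * I1 a l v p =
      4 * ∑ j, ∑ k, ∑ j', ∑ k',
          pd j (fun x => a j k x * a j' k' x * pd j' l x) p * pd k' v p * pd k v p
        - 2 * ∑ j, ∑ k, ∑ j', ∑ k',
            pd k' (fun x => a j k x * a j' k' x * pd j' l x) p * pd j v p * pd k v p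
        + 2 * ∑ j, ∑ k, ∑ j', ∑ k',
            pd j (fun x => a j k x * a j' k' x * pd j' l x * pd k' l x * pd k l x) p
              * v p ^ 2
        + ∑ j, pd j (fun x => ∑ k, ∑ j', ∑ k',
            a j k x * a j' k' x *
              (2 * pd k l x * pd j' v x * pd k' v x
                - 4 * pd j' l x * pd k v x * pd k' v x
                - 2 * pd j' l x * pd k' l x * pd k l x * v x ^ 2)) p := by
  have ha' : ∀ j k, DifferentiableAt ℝ (a j k) p :=
    fun j k => (ha j k).differentiable two_ne_zero p
  have hl' : ∀ i, DifferentiableAt ℝ (pd i l) p :=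
    fun i => (contDiff_pd (m := 1) i hl (by norm_num)).differentiable one_ne_zero p
  have hv' : ∀ i, DifferentiableAt ℝ (pd i v) p :=
    fun i => (contDiff_pd (m := 1) i hv le_rfl).differentiable one_ne_zero p
  rw [two_mul_I2_mul_I1 a l v p hsym,
    sum_pd_divergence a l v p ha' hl' (hv.differentiable two_ne_zero p) hv',
    sum_pd_coeff_reindex a l v p hsym, sum_hessian_comm_inner a l v p hsym,
    sum_hessian_reindex a l v p hsym fun i j => pd_comm hv.contDiffAt i j]
  ring

/-- cross-term identity for `2I₂I₁`, eq. (2.10) in the proof of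
Proposition 2.3 of the paper. -/
theorem cross_term_I2_I1 {N : ℕ} (hN : 1 ≤ N)
    (a : Fin N → Fin N → (Fin N → ℝ) → ℝ) (ha : ∀ j k, ContDiff ℝ 2 (a j k))
    (hsym : ∀ j k, a j k = a k j)
    (l v : (Fin N → ℝ) → ℝ) (hl : ContDiff ℝ 3 l) (hv : ContDiff ℝ 2 v)
    (p : Fin N → ℝ) :
    2 * I2 a l v p * I1 a l v p =
      4 * ∑ j, ∑ k, ∑ j', ∑ k',
          pd j (fun x => a j k x * a j' k' x * pd j' l x) p * pd k' v p * pd k v p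
        - 2 * ∑ j, ∑ k, ∑ j', ∑ k',
            pd k' (fun x => a j k x * a j' k' x * pd j' l x) p * pd j v p * pd k v p
        + 2 * ∑ j, ∑ k, ∑ j', ∑ k',
            pd j (fun x => a j k x * a j' k' x * pd j' l x * pd k' l x * pd k l x) p
              * v p ^ 2
        + ∑ j, pd j (fun x => ∑ k, ∑ j', ∑ k',
            a j k x * a j' k' x *
              (2 * pd k l x * pd j' v x * pd k' v x
                - 4 * pd j' l x * pd k v x * pd k' v x
                - 2 * pd j' l x * pd k' l x * pd k l x * v x ^ 2)) p :=
  cross_term_I2_I1_general a ha hsym l v hl hv p
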